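/- Let 𝔥 be a fat indecomposable Hoffman graph with smallest eigenvalue at least −3. Then every slim vertex of 𝔥 has at most three fat neighbors. Moreover: (i) if some slim vertex has three fat neighbors, then 𝔥 is isomorphic to 𝔥^(3); (ii) if no slim vertex has three fat neighbors and some slim vertex has exactly two fat neighbors, then Λ^red(𝔥, 3) is isomorphic to the standard lattice ℤⁿ for some positive integer n; (iii) if every slim vertex has exactly one fat neighbor, then Λ^red(𝔥, 3) is an irreducible root lattice. -/

import Mathlib

attribute [local instance] Classical.propDecidable

open scoped RealInnerProductSpace

/-- A Hoffman graph: a graph together with a labeling of its vertices as fat or slim,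
such that every fat vertex has a slim neighbor and fat vertices are pairwise nonadjacent. -/
structure HoffmanGraph (V : Type*) where
  graph : SimpleGraph V
  IsFat : V → Prop
  fat_not_adj : ∀ {x y : V}, IsFat x → IsFat y → ¬ graph.Adj x y
  fat_slim_nbr : ∀ {x : V}, IsFat x → ∃ y : V, ¬ IsFat y ∧ graph.Adj x y

namespace HoffmanGraph

variable {V : Type*}

/-- A vertex is slim if it is not fat. -/
def IsSlim (H : HoffmanGraph V) (x : V) : Prop := ¬ H.IsFat x

/-- The type of slim vertices. -/
abbrev Slim (H : HoffmanGraph V) := {v : V // H.IsSlim v}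

/-- The number of fat neighbors of a vertex. -/
noncomputable def fatDeg (H : HoffmanGraph V) (x : V) : ℕ :=
  {f : V | H.IsFat f ∧ H.graph.Adj x f}.ncard

/-- The number of common fat neighbors of two vertices. -/
noncomputable def commonFat (H : HoffmanGraph V) (x y : V) : ℕ :=
  {f : V | H.IsFat f ∧ H.graph.Adj x f ∧ H.graph.Adj y f}.ncard

lemma commonFat_comm (H : HoffmanGraph V) (x y : V) :
    H.commonFat x y = H.commonFat y x := by
  unfold commonFat
  congr 1
  ext f
  simp only [Set.mem_setOf_eq]
  tauto

/-- A Hoffman graph is fat if every slim vertex has a fat neighbor. -/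
def IsFatGraph (H : HoffmanGraph V) : Prop :=
  ∀ x, H.IsSlim x → ∃ f, H.IsFat f ∧ H.graph.Adj x f

/-- A representation of norm `m`. -/
def IsRep (H : HoffmanGraph V) (m : ℝ) {E : Type*} [NormedAddCommGroup E]
    [InnerProductSpace ℝ E] (φ : V → E) : Prop :=
  (∀ x, H.IsSlim x → ⟪φ x, φ x⟫ = m) ∧
  (∀ x, H.IsFat x → ⟪φ x, φ x⟫ = 1) ∧
  (∀ x y, H.graph.Adj x y → ⟪φ x, φ y⟫ = 1) ∧
  (∀ x y, x ≠ y → ¬ H.graph.Adj x y → ⟪φ x, φ y⟫ = 0)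

/-- A reduced representation of norm `m` (only the values on slim vertices matter). -/
def IsReducedRep (H : HoffmanGraph V) (m : ℝ) {E : Type*} [NormedAddCommGroup E]
    [InnerProductSpace ℝ E] (ψ : V → E) : Prop :=
  (∀ x, H.IsSlim x → ⟪ψ x, ψ x⟫ = m - H.fatDeg x) ∧
  (∀ x y, H.IsSlim x → H.IsSlim y → H.graph.Adj x y → ⟪ψ x, ψ y⟫ = 1 - H.commonFat x y) ∧
  (∀ x y, H.IsSlim x → H.IsSlim y → x ≠ y → ¬ H.graph.Adj x y →
    ⟪ψ x, ψ y⟫ = - (H.commonFat x y : ℝ))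

/-- The matrix B(𝔥) = A_s − C Cᵀ, indexed by the slim vertices. -/
noncomputable def matrixB (H : HoffmanGraph V) : Matrix H.Slim H.Slim ℝ :=
  fun x y => (if H.graph.Adj x.1 y.1 then (1 : ℝ) else 0) - (H.commonFat x.1 y.1 : ℝ)

/-- The smallest eigenvalue of a Hoffman graph. -/
noncomputable def lambdaMin (H : HoffmanGraph V) [Fintype V] : ℝ :=
  sInf (spectrum ℝ H.matrixB)

/-- A subset of the vertices induces a Hoffman graph iff every fat vertex of it retains
a slim neighbor inside it. -/
def IsGoodSubset (H : HoffmanGraph V) (S : Set V) : Prop :=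
  ∀ x ∈ S, H.IsFat x → ∃ y ∈ S, ¬ H.IsFat y ∧ H.graph.Adj x y

/-- The induced Hoffman subgraph on a good subset. -/
def induce (H : HoffmanGraph V) (S : Set V) (hS : H.IsGoodSubset S) : HoffmanGraph S where
  graph := H.graph.induce S
  IsFat := fun x => H.IsFat x.1
  fat_not_adj := by
    intro x y hx hy hadj
    exact H.fat_not_adj hx hy hadj
  fat_slim_nbr := by
    rintro ⟨x, hxS⟩ hx
    obtain ⟨y, hyS, hy, hadj⟩ := hS x hxS hx
    exact ⟨⟨y, hyS⟩, hy, hadj⟩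

/-- An (abstract) induced Hoffman subgraph relation between Hoffman graphs. -/
def IsInducedSubgraphOf {V₁ V₂ : Type*} (H₁ : HoffmanGraph V₁) (H₂ : HoffmanGraph V₂) : Prop :=
  ∃ e : V₁ ↪ V₂, (∀ x y, H₂.graph.Adj (e x) (e y) ↔ H₁.graph.Adj x y) ∧
    (∀ x, H₂.IsFat (e x) ↔ H₁.IsFat x)

/-- Isomorphism of Hoffman graphs. -/
def IsIsoTo {V₁ V₂ : Type*} (H₁ : HoffmanGraph V₁) (H₂ : HoffmanGraph V₂) : Prop :=
  ∃ e : V₁ ≃ V₂, (∀ x y, H₂.graph.Adj (e x) (e y) ↔ H₁.graph.Adj x y) ∧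
    (∀ x, H₂.IsFat (e x) ↔ H₁.IsFat x)

/-- `H` is the sum of its induced subgraphs on `W₁` and `W₂`. -/
structure IsSum (H : HoffmanGraph V) (W₁ W₂ : Set V) : Prop where
  nonempty₁ : W₁.Nonempty
  nonempty₂ : W₂.Nonempty
  good₁ : H.IsGoodSubset W₁
  good₂ : H.IsGoodSubset W₂
  union_eq : W₁ ∪ W₂ = Set.univ
  slim_partition : ∀ v, H.IsSlim v → (v ∈ W₁ ↔ v ∉ W₂)
  fat_closed₁ : ∀ x ∈ W₁, H.IsSlim x → ∀ f, H.IsFat f → H.graph.Adj x f → f ∈ W₁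
  fat_closed₂ : ∀ x ∈ W₂, H.IsSlim x → ∀ f, H.IsFat f → H.graph.Adj x f → f ∈ W₂
  common_le : ∀ x ∈ W₁, ∀ y ∈ W₂, H.IsSlim x → H.IsSlim y → H.commonFat x y ≤ 1
  common_iff : ∀ x ∈ W₁, ∀ y ∈ W₂, H.IsSlim x → H.IsSlim y →
    (H.commonFat x y = 1 ↔ H.graph.Adj x y)

/-- `H` is decomposable if it is the sum of two nonempty induced Hoffman subgraphs. -/
def Decomposable (H : HoffmanGraph V) : Prop := ∃ W₁ W₂ : Set V, H.IsSum W₁ W₂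

def Indecomposable (H : HoffmanGraph V) : Prop := ¬ H.Decomposable

/-- `H` is the sum of the family of its induced subgraphs on `W i`. -/
structure IsSumFamily (H : HoffmanGraph V) {n : ℕ} (W : Fin n → Set V) : Prop where
  nonempty : ∀ i, (W i).Nonempty
  good : ∀ i, H.IsGoodSubset (W i)
  union_eq : ⋃ i, W i = Set.univ
  slim_mem_unique : ∀ v, H.IsSlim v → ∃! i, v ∈ W i
  fat_closed : ∀ i, ∀ x ∈ W i, H.IsSlim x → ∀ f, H.IsFat f → H.graph.Adj x f → f ∈ W i
  common_le : ∀ i j, i ≠ j → ∀ x ∈ W i, ∀ y ∈ W j, H.IsSlim x → H.IsSlim y →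
    H.commonFat x y ≤ 1
  common_iff : ∀ i j, i ≠ j → ∀ x ∈ W i, ∀ y ∈ W j, H.IsSlim x → H.IsSlim y →
    (H.commonFat x y = 1 ↔ H.graph.Adj x y)

/-- Attach a new fat vertex (the `none` vertex) adjacent exactly to the slim vertices in `S`. -/
def attachFat (H : HoffmanGraph V) (S : Set V) (hne : S.Nonempty)
    (hslim : ∀ v ∈ S, H.IsSlim v) : HoffmanGraph (Option V) where
  graph := {
    Adj := fun a b =>
      match a, b with
      | none, none => False
      | none, some v => v ∈ S
      | some v, none => v ∈ S
      | some u, some v => H.graph.Adj u v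
    symm := by
      refine ⟨?_⟩
      rintro (_|u) (_|v) h
      · exact h.elim
      · exact h
      · exact h
      · exact h.symm
    loopless := by
      refine ⟨?_⟩
      rintro (_|u) h
      · exact h.elim
      · exact H.graph.loopless.irrefl u h }
  IsFat := fun a => match a with | none => True | some v => H.IsFat v
  fat_not_adj := by
    rintro (_|u) (_|v) hu hv h
    · exact h.elim
    · exact (hslim v h) hv
    · exact (hslim u h) hu
    · exact H.fat_not_adj hu hv h
  fat_slim_nbr := by
    rintro (_|u) hu
    · obtain ⟨s, hs⟩ := hne
      exact ⟨some s, hslim s hs, hs⟩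
    · obtain ⟨y, hy, hadj⟩ := H.fat_slim_nbr hu
      exact ⟨some y, hy, hadj⟩

/-- `H` is `μ`-saturated: it has smallest eigenvalue at least `μ` and no fat vertex can be
attached while keeping the smallest eigenvalue at least `μ`. -/
def IsSaturated (H : HoffmanGraph V) [Fintype V] (μ : ℝ) : Prop :=
  μ ≤ H.lambdaMin ∧
  ∀ (S : Set V) (hne : S.Nonempty) (hslim : ∀ v ∈ S, H.IsSlim v),
    ¬ (μ ≤ (H.attachFat S hne hslim).lambdaMin)

/-- The special graph `S⁻(𝔥)`: slim vertices, adjacent when the inner product of their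
reduced representations is negative. -/
noncomputable def specialMinus (H : HoffmanGraph V) : SimpleGraph H.Slim where
  Adj x y := x ≠ y ∧
    ((H.graph.Adj x.1 y.1 ∧ (1 : ℝ) - (H.commonFat x.1 y.1 : ℝ) < 0) ∨
     (¬ H.graph.Adj x.1 y.1 ∧ -(H.commonFat x.1 y.1 : ℝ) < 0))
  symm := by
    refine ⟨?_⟩
    rintro x y ⟨hne, h⟩
    refine ⟨hne.symm, ?_⟩
    rw [H.commonFat_comm y.1 x.1]
    rcases h with ⟨ha, hl⟩ | ⟨ha, hl⟩
    · exact Or.inl ⟨ha.symm, hl⟩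
    · exact Or.inr ⟨fun hadj => ha hadj.symm, hl⟩
  loopless := ⟨fun x h => h.1 rfl⟩

/-- The special graph `S⁺(𝔥)`: slim vertices, adjacent when the inner product of their
reduced representations is positive. -/
noncomputable def specialPlus (H : HoffmanGraph V) : SimpleGraph H.Slim where
  Adj x y := x ≠ y ∧
    ((H.graph.Adj x.1 y.1 ∧ 0 < (1 : ℝ) - (H.commonFat x.1 y.1 : ℝ)) ∨
     (¬ H.graph.Adj x.1 y.1 ∧ 0 < -(H.commonFat x.1 y.1 : ℝ)))
  symm := by
    refine ⟨?_⟩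
    rintro x y ⟨hne, h⟩
    refine ⟨hne.symm, ?_⟩
    rw [H.commonFat_comm y.1 x.1]
    rcases h with ⟨ha, hl⟩ | ⟨ha, hl⟩
    · exact Or.inl ⟨ha.symm, hl⟩
    · exact Or.inr ⟨fun hadj => ha hadj.symm, hl⟩
  loopless := ⟨fun x h => h.1 rfl⟩

/-- The special graph `S(𝔥)`, the union of `S⁻(𝔥)` and `S⁺(𝔥)`. -/
noncomputable def special (H : HoffmanGraph V) : SimpleGraph H.Slim :=
  H.specialMinus ⊔ H.specialPlus

/-- `⟨S⟩_𝔥`: the set `S` together with all fat neighbors of its members. -/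
def closureSet (H : HoffmanGraph V) (S : Set V) : Set V :=
  S ∪ {f | H.IsFat f ∧ ∃ x ∈ S, H.graph.Adj x f}

/-- The Hoffman graph `𝔥^(t)` with one slim vertex (`none`) and `t` fat vertices. -/
def manyFat (t : ℕ) : HoffmanGraph (Option (Fin t)) where
  graph := {
    Adj := fun a b => (a = none ∧ b ≠ none) ∨ (a ≠ none ∧ b = none)
    symm := by
      refine ⟨?_⟩
      rintro a b (⟨h1, h2⟩ | ⟨h1, h2⟩)
      · exact Or.inr ⟨h2, h1⟩
      · exact Or.inl ⟨h2, h1⟩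
    loopless := by
      refine ⟨?_⟩
      rintro a (⟨h1, h2⟩ | ⟨h1, h2⟩)
      · exact h2 h1
      · exact h1 h2 }
  IsFat := fun a => a ≠ none
  fat_not_adj := by
    rintro a b ha hb (⟨h1, _⟩ | ⟨_, h1⟩)
    · exact ha h1
    · exact hb h1
  fat_slim_nbr := by
    intro a ha
    refine ⟨none, by simp, Or.inr ⟨ha, rfl⟩⟩

/-- An ordinary (slim) graph regarded as a Hoffman graph. -/
def ofSimple {W : Type*} (G : SimpleGraph W) : HoffmanGraph W where
  graph := G
  IsFat := fun _ => False
  fat_not_adj := by intro x y hx _ _; exact hx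
  fat_slim_nbr := by intro x hx; exact hx.elim

end HoffmanGraph
namespace HoffmanGraph

variable {V : Type*}

/-- The Hoffman graph obtained by replacing the fat vertices `f i` by slim cliques of
sizes `n i`, joining all neighbors of `f i` to all vertices of the `i`-th clique. -/
def blowup {k : ℕ} (H : HoffmanGraph V) (f : Fin k → V) (hf : ∀ i, H.IsFat (f i))
    (n : Fin k → ℕ) :
    HoffmanGraph ({v : V // v ∉ Set.range f} ⊕ (Σ i : Fin k, Fin (n i))) where
  graph := {
    Adj := fun a b =>
      match a, b with
      | .inl u, .inl v => H.graph.Adj u.1 v.1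
      | .inl u, .inr x => H.graph.Adj u.1 (f x.1)
      | .inr x, .inl v => H.graph.Adj (f x.1) v.1
      | .inr x, .inr y => x ≠ y ∧ x.1 = y.1
    symm := by
      refine ⟨?_⟩
      rintro (u|x) (v|y) h
      · exact h.symm
      · exact h.symm
      · exact h.symm
      · exact ⟨h.1.symm, h.2.symm⟩
    loopless := by
      refine ⟨?_⟩
      rintro (u|x) h
      · exact H.graph.loopless.irrefl _ h
      · exact h.1 rfl }
  IsFat := fun a => match a with | .inl u => H.IsFat u.1 | .inr _ => False
  fat_not_adj := by
    rintro (u|x) (v|y) hu hv h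
    · exact H.fat_not_adj hu hv h
    · exact hv
    · exact hu
    · exact hu
  fat_slim_nbr := by
    rintro (u|x) hu
    · obtain ⟨y, hy, hadj⟩ := H.fat_slim_nbr hu
      refine ⟨Sum.inl ⟨y, ?_⟩, hy, hadj⟩
      rintro ⟨i, rfl⟩
      exact hy (hf i)
    · exact hu.elim

/-- The slim graph obtained by replacing every fat vertex by a slim `n`-clique,
joining all neighbors of a fat vertex to all vertices of its clique. -/
def blowupAll (H : HoffmanGraph V) (n : ℕ) :
    HoffmanGraph (H.Slim ⊕ ({f : V // H.IsFat f} × Fin n)) where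
  graph := {
    Adj := fun a b =>
      match a, b with
      | .inl u, .inl v => H.graph.Adj u.1 v.1
      | .inl u, .inr x => H.graph.Adj u.1 x.1.1
      | .inr x, .inl v => H.graph.Adj x.1.1 v.1
      | .inr x, .inr y => x ≠ y ∧ x.1 = y.1
    symm := by
      refine ⟨?_⟩
      rintro (u|x) (v|y) h
      · exact h.symm
      · exact h.symm
      · exact h.symm
      · exact ⟨h.1.symm, h.2.symm⟩
    loopless := by
      refine ⟨?_⟩
      rintro (u|x) h
      · exact H.graph.loopless.irrefl _ h
      · exact h.1 rfl }
  IsFat := fun _ => False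
  fat_not_adj := by intro x y hx _; exact hx.elim
  fat_slim_nbr := by intro x hx; exact hx.elim

/-- The Hoffman graph of Example 4.2: slim vertices `ℤ/4ℤ` (the `inl`'s), fat vertices
`f_j` for `j ∈ ℤ/4ℤ` (the `inr`'s), with edges `{0,2}`, `{1,3}` and `{i, f_j}` for
`i = j` or `i = j + 1`. -/
def exampleA3tilde : HoffmanGraph (ZMod 4 ⊕ ZMod 4) where
  graph := {
    Adj := fun a b =>
      match a, b with
      | .inl i, .inl j => j = i + 2
      | .inl i, .inr j => i = j ∨ i = j + 1
      | .inr j, .inl i => i = j ∨ i = j + 1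
      | .inr _, .inr _ => False
    symm := by
      have h4 : (2 : ZMod 4) + 2 = 0 := by decide
      refine ⟨?_⟩
      rintro (i|i) (j|j) h
      · have h' : j = i + 2 := h
        subst h'
        show i = i + 2 + 2
        rw [add_assoc, h4, add_zero]
      · exact h
      · exact h
      · exact h.elim
    loopless := by
      refine ⟨?_⟩
      rintro (i|i) h
      · exact absurd (left_eq_add.mp h) (by decide)
      · exact h }
  IsFat := fun a => match a with | .inl _ => False | .inr _ => True
  fat_not_adj := by
    rintro (i|i) (j|j) hx hy h
    · exact hx
    · exact hx
    · exact hy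
    · exact h
  fat_slim_nbr := by
    rintro (i|i) hx
    · exact hx.elim
    · exact ⟨Sum.inl i, id, Or.inl rfl⟩

end HoffmanGraph

/-- The extended Dynkin graph `D̃₄`, i.e. the star `K_{1,4}`. -/
def tildeD4Graph : SimpleGraph (Fin 5) := SimpleGraph.fromRel (fun a _ => a = 0)

/-- The Dynkin graph `A_m`: the path on `m` vertices. -/
def dynkinA (m : ℕ) : SimpleGraph (Fin m) :=
  SimpleGraph.fromRel (fun i j => i.1 + 1 = j.1)

/-- The extended Dynkin graph `Ã_m`: the cycle on `m + 1` vertices. -/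
def tildeA (m : ℕ) : SimpleGraph (ZMod (m + 1)) :=
  SimpleGraph.fromRel (fun i j => i + 1 = j)

/-- The Dynkin graph `D_m`: the path `1 - 2 - ⋯ - (m-1)` with the extra vertex `0`
attached to the vertex `2`. -/
def dynkinD (m : ℕ) : SimpleGraph (Fin m) :=
  SimpleGraph.fromRel (fun i j => (1 ≤ i.1 ∧ i.1 + 1 = j.1) ∨ (i.1 = 0 ∧ j.1 = 2))

/-- The extended Dynkin graph `D̃_m` on `m + 1` vertices: the path `1 - 2 - ⋯ - (m-1)`
with the extra vertex `0` attached to `2` and the extra vertex `m` attached to `m - 2`. -/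
def tildeD (m : ℕ) : SimpleGraph (Fin (m + 1)) :=
  SimpleGraph.fromRel (fun i j =>
    (1 ≤ i.1 ∧ i.1 + 1 = j.1 ∧ j.1 ≤ m - 1) ∨ (i.1 = 0 ∧ j.1 = 2) ∨ (i.1 = m ∧ j.1 = m - 2))
/-- A sublattice of a real inner product space is integral if all inner products of its
elements are integers. -/
def IsIntegralLattice {E : Type*} [NormedAddCommGroup E] [InnerProductSpace ℝ E]
    (L : Submodule ℤ E) : Prop :=
  ∀ u ∈ L, ∀ v ∈ L, ∃ k : ℤ, ⟪u, v⟫ = (k : ℝ)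

/-- A root lattice: an integral lattice generated by its vectors of norm `2`. -/
def IsRootLattice {E : Type*} [NormedAddCommGroup E] [InnerProductSpace ℝ E]
    (L : Submodule ℤ E) : Prop :=
  IsIntegralLattice L ∧ L = Submodule.span ℤ {v | v ∈ L ∧ ⟪v, v⟫ = (2 : ℝ)}

/-- A lattice is irreducible if it is nonzero and is not the orthogonal direct sum of
two nonzero sublattices. -/
def IsIrreducibleLattice {E : Type*} [NormedAddCommGroup E] [InnerProductSpace ℝ E]
    (L : Submodule ℤ E) : Prop :=
  L ≠ ⊥ ∧ ∀ L₁ L₂ : Submodule ℤ E, L₁ ⊔ L₂ = L →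
    (∀ u ∈ L₁, ∀ v ∈ L₂, ⟪u, v⟫ = (0 : ℝ)) → L₁ = ⊥ ∨ L₂ = ⊥

/-!
Everything is read off from `B(𝔥) + 3I`, which is positive semidefinite and is the Gram matrix
of a reduced representation of norm 3. Its diagonal entries are `3 - |N^f(x)|`, so a slim vertex
has at most three fat neighbors, and a zero diagonal entry forces a zero row. Indecomposability
says exactly that the slim vertices cannot be split into two classes with vanishing entries of
`B(𝔥)` between them; hence a slim vertex with three fat neighbors is the only slim vertex, and
the generators of `Λ^red(𝔥, 3)` are connected under non-orthogonality. If some generator has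
norm 1, every generator of norm 2 that meets a unit vector `u` differs from `±u` by another unit
vector, so the unit vectors span the lattice and a maximal orthonormal set of them is a basis. If
all generators have norm 2, the lattice is even, each root lies in one summand of an orthogonal
splitting, and connectedness puts all roots in the same summand.
-/

lemma Matrix.IsHermitian.posSemidef_add_smul_one {n : Type*} [Fintype n] [DecidableEq n]
    {A : Matrix n n ℝ} (hA : A.IsHermitian) {c : ℝ} (hc : -c ≤ sInf (spectrum ℝ A)) :
    (A + c • 1).PosSemidef := by
  have hherm : (A + c • 1).IsHermitian := hA.add (Matrix.isHermitian_one.smul (IsSelfAdjoint.all c))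
  refine Matrix.posSemidef_iff_isHermitian_and_spectrum_nonneg.2 ⟨hherm, fun t ht => ?_⟩
  have hshift : t - c ∈ spectrum ℝ A := by
    rw [← spectrum.add_mem_add_iff (s := c), sub_add_cancel, Algebra.algebraMap_eq_smul_one,
      add_comm]
    exact ht
  have := csInf_le (Matrix.finite_spectrum A).bddBelow hshift
  show 0 ≤ t
  linarith

lemma Matrix.PosSemidef.apply_eq_zero_of_apply_self_eq_zero {n : Type*} [Fintype n]
    {A : Matrix n n ℝ} (hA : A.PosSemidef) {i : n} (hi : A i i = 0) (j : n) : A i j = 0 := by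
  have hdet := (hA.submatrix ![i, j]).det_nonneg
  have hsymm : A j i = A i j := hA.1.apply i j
  rw [Matrix.det_fin_two] at hdet
  simp only [Matrix.submatrix_apply, Matrix.cons_val_zero, Matrix.cons_val_one, hi, hsymm] at hdet
  nlinarith [sq_nonneg (A i j)]

lemma Int.eq_one_or_eq_neg_one_of_mul_self_le_two {k : ℤ} (hk : k ≠ 0)
    (h : (k : ℝ) * k ≤ 2) : k = 1 ∨ k = -1 := by
  have h' : k * k ≤ 2 := by exact_mod_cast h
  have : -1 ≤ k := by nlinarith
  have : k ≤ 1 := by nlinarith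
  omega

section Lattice

open Submodule

variable {E : Type*} [NormedAddCommGroup E] [InnerProductSpace ℝ E]

/-- `R` is not the union of two nonempty mutually orthogonal parts, phrased through the subsets
closed under passing to non-orthogonal elements of `R`. -/
def OrthConnected (R : Set E) : Prop :=
  ∀ P : Set E, (R ∩ P).Nonempty → (∀ u ∈ R ∩ P, ∀ v ∈ R, ⟪u, v⟫ ≠ 0 → v ∈ P) → R ⊆ P

def unitVectors (L : Submodule ℤ E) : Set E := {u | u ∈ L ∧ ⟪u, u⟫ = 1}

lemma isIntegralLattice_span {R : Set E} (hR : ∀ u ∈ R, ∀ v ∈ R, ∃ k : ℤ, ⟪u, v⟫ = k) :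
    IsIntegralLattice (span ℤ R) := by
  let Z : Submodule ℤ ℝ := LinearMap.range (Algebra.linearMap ℤ ℝ)
  have hZ : ∀ t : ℝ, t ∈ Z ↔ ∃ k : ℤ, t = k := fun t => by simp [Z, eq_comm]
  have hspan : ∀ u, (∀ v ∈ R, ⟪u, v⟫ ∈ Z) → ∀ v ∈ span ℤ R, ⟪u, v⟫ ∈ Z := fun u hu =>
    (span_le (p := Z.comap ((innerₗ E u).restrictScalars ℤ))).2 hu
  have hleft : ∀ u ∈ R, ∀ v ∈ span ℤ R, ⟪v, u⟫ ∈ Z := fun u hu v hv => by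
    rw [real_inner_comm]
    exact hspan u (fun w hw => (hZ _).2 (hR u hu w hw)) v hv
  intro u hu v hv
  exact (hZ _).1 (hspan u (fun w hw => hleft w hw u hu) v hv)

lemma even_inner_self_of_mem_span {R : Set E} (hR : ∀ u ∈ R, ∀ v ∈ R, ∃ k : ℤ, ⟪u, v⟫ = k)
    (h2 : ∀ u ∈ R, ⟪u, u⟫ = 2) {v : E} (hv : v ∈ span ℤ R) : ∃ k : ℤ, ⟪v, v⟫ = 2 * k := by
  induction hv using span_induction with
  | mem x hx => exact ⟨1, by rw [h2 x hx]; norm_num⟩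
  | zero => exact ⟨0, by simp⟩
  | add x y hx hy ihx ihy =>
    obtain ⟨k, hk⟩ := ihx
    obtain ⟨l, hl⟩ := ihy
    obtain ⟨m, hm⟩ := isIntegralLattice_span hR x hx y hy
    refine ⟨k + l + m, ?_⟩
    rw [real_inner_add_add_self, hk, hl, hm]
    push_cast
    ring
  | smul a x hx ihx =>
    obtain ⟨k, hk⟩ := ihx
    refine ⟨a ^ 2 * k, ?_⟩
    rw [← Int.cast_smul_eq_zsmul ℝ, real_inner_smul_left, real_inner_smul_right, hk]
    push_cast
    ring

lemma isRootLattice_span {R : Set E} (hR : ∀ u ∈ R, ∀ v ∈ R, ∃ k : ℤ, ⟪u, v⟫ = k)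
    (h2 : ∀ u ∈ R, ⟪u, u⟫ = 2) : IsRootLattice (span ℤ R) :=
  ⟨isIntegralLattice_span hR, le_antisymm
    (span_le.2 fun u hu => subset_span ⟨subset_span hu, h2 u hu⟩) (span_le.2 fun _ hv => hv.1)⟩

/-- A root is a sum of two orthogonal lattice vectors of even norm, so one of them vanishes. -/
lemma mem_or_mem_of_sup_eq_span {R : Set E} (hR : ∀ u ∈ R, ∀ v ∈ R, ∃ k : ℤ, ⟪u, v⟫ = k)
    (h2 : ∀ u ∈ R, ⟪u, u⟫ = 2) {L₁ L₂ : Submodule ℤ E} (hsup : L₁ ⊔ L₂ = span ℤ R)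
    (horth : ∀ u ∈ L₁, ∀ v ∈ L₂, ⟪u, v⟫ = (0 : ℝ)) {r : E} (hr : r ∈ R) : r ∈ L₁ ∨ r ∈ L₂ := by
  obtain ⟨u, hu, w, hw, rfl⟩ := mem_sup.1 (hsup ▸ subset_span hr : r ∈ L₁ ⊔ L₂)
  have hu' : u ∈ span ℤ R := hsup ▸ mem_sup_left hu
  have hw' : w ∈ span ℤ R := hsup ▸ mem_sup_right hw
  obtain ⟨k, hk⟩ := even_inner_self_of_mem_span hR h2 hu'
  obtain ⟨l, hl⟩ := even_inner_self_of_mem_span hR h2 hw'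
  have hsum : (2 * k + 2 * l : ℝ) = 2 := by
    rw [← hk, ← hl, ← h2 _ hr, real_inner_add_add_self, horth u hu w hw]
    ring
  have hk0 : (0 : ℝ) ≤ 2 * k := hk ▸ real_inner_self_nonneg
  have hl0 : (0 : ℝ) ≤ 2 * l := hl ▸ real_inner_self_nonneg
  have hkl : k = 0 ∨ l = 0 := by
    have : k + l = 1 := by exact_mod_cast (by linarith : (k + l : ℝ) = 1)
    have : 0 ≤ k := by exact_mod_cast (by linarith : (0 : ℝ) ≤ k)
    have : 0 ≤ l := by exact_mod_cast (by linarith : (0 : ℝ) ≤ l)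
    omega
  rcases hkl with h | h
  · right
    rw [inner_self_eq_zero.1 (by rw [hk, h]; simp : ⟪u, u⟫ = 0), zero_add]
    exact hw
  · left
    rw [inner_self_eq_zero.1 (by rw [hl, h]; simp : ⟪w, w⟫ = 0), add_zero]
    exact hu

lemma eq_bot_of_sup_eq_span {R : Set E} (hR : ∀ u ∈ R, ∀ v ∈ R, ∃ k : ℤ, ⟪u, v⟫ = k)
    (h2 : ∀ u ∈ R, ⟪u, u⟫ = 2) (hconn : OrthConnected R) {L₁ L₂ : Submodule ℤ E}
    (hsup : L₁ ⊔ L₂ = span ℤ R) (horth : ∀ u ∈ L₁, ∀ v ∈ L₂, ⟪u, v⟫ = (0 : ℝ))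
    (hmeet : (R ∩ L₁).Nonempty) : L₂ = ⊥ := by
  have hRL₁ : R ⊆ L₁ := hconn L₁ hmeet fun u ⟨_, hu⟩ v hv huv =>
    (mem_or_mem_of_sup_eq_span hR h2 hsup horth hv).resolve_right fun hv₂ => huv (horth u hu v hv₂)
  have hL₂L₁ : L₂ ≤ L₁ := hsup ▸ le_sup_right |>.trans (span_le.2 hRL₁)
  exact eq_bot_iff.2 fun v hv => (mem_bot ℤ).2 (inner_self_eq_zero.1 (horth v (hL₂L₁ hv) v hv))

lemma isIrreducibleLattice_span {R : Set E} (hR : ∀ u ∈ R, ∀ v ∈ R, ∃ k : ℤ, ⟪u, v⟫ = k)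
    (h2 : ∀ u ∈ R, ⟪u, u⟫ = 2) (hconn : OrthConnected R) (hne : R.Nonempty) :
    IsIrreducibleLattice (span ℤ R) := by
  obtain ⟨r, hr⟩ := hne
  refine ⟨fun hbot => ?_, fun L₁ L₂ hsup horth => ?_⟩
  · have h0 : r = 0 := (mem_bot ℤ).1 (hbot ▸ subset_span hr)
    simpa [h0] using h2 r hr
  · rcases mem_or_mem_of_sup_eq_span hR h2 hsup horth hr with h | h
    · exact Or.inr (eq_bot_of_sup_eq_span hR h2 hconn hsup horth ⟨r, hr, h⟩)
    · exact Or.inl (eq_bot_of_sup_eq_span hR h2 hconn (sup_comm L₁ L₂ ▸ hsup)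
        (fun u hu v hv => by rw [real_inner_comm]; exact horth v hv u hu) ⟨r, hr, h⟩)

lemma eq_or_eq_neg_of_inner_eq_intCast {u w : E} (hu : ⟪u, u⟫ = 1) (hw : ⟪w, w⟫ = 1) {k : ℤ}
    (hk : ⟪u, w⟫ = k) (hk0 : k ≠ 0) : u = w ∨ u = -w := by
  have hcs := real_inner_mul_inner_self_le u w
  rw [hu, hw, hk] at hcs
  rcases Int.eq_one_or_eq_neg_one_of_mul_self_le_two hk0 (by linarith) with rfl | rfl
  · left
    rw [← sub_eq_zero, ← inner_self_eq_zero (𝕜 := ℝ), real_inner_sub_sub_self, hu, hw, hk]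
    norm_num
  · right
    rw [← sub_eq_zero, sub_neg_eq_add, ← inner_self_eq_zero (𝕜 := ℝ), real_inner_add_add_self,
      hu, hw, hk]
    norm_num

/-- If `⟪b, u⟫ = k ≠ 0` for a unit vector `u`, then `k = ±1` and `b - k • u` is again a unit
vector of the lattice. -/
lemma mem_span_unitVectors_of_inner_ne_zero {L : Submodule ℤ E} (hL : IsIntegralLattice L)
    {b m : E} (hb : b ∈ L) (hbb : ⟪b, b⟫ = 2) (hm : m ∈ span ℤ (unitVectors L))
    (hbm : ⟪b, m⟫ ≠ 0) : b ∈ span ℤ (unitVectors L) := by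
  obtain ⟨u, hu, hbu⟩ : ∃ u ∈ unitVectors L, ⟪b, u⟫ ≠ 0 := by
    by_contra! h
    exact hbm ((span_le (p := LinearMap.ker ((innerₗ E b).restrictScalars ℤ))).2 h hm)
  obtain ⟨k, hk⟩ := hL b hb u hu.1
  have hk0 : k ≠ 0 := by rintro rfl; simp [hk] at hbu
  have hcs := real_inner_mul_inner_self_le b u
  rw [hbb, hu.2, hk] at hcs
  have hkk : (k : ℝ) * k = 1 := by
    rcases Int.eq_one_or_eq_neg_one_of_mul_self_le_two hk0 (by linarith) with rfl | rfl <;> norm_num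
  have hw : b - k • u ∈ unitVectors L := by
    refine ⟨L.sub_mem hb (L.smul_mem k hu.1), ?_⟩
    rw [← Int.cast_smul_eq_zsmul ℝ, real_inner_sub_sub_self]
    simp only [real_inner_smul_left, real_inner_smul_right, hk, hu.2, hbb]
    linarith
  rw [← sub_add_cancel b (k • u)]
  exact add_mem (subset_span hw) (smul_mem _ k (subset_span hu))

lemma exists_orthonormal_subset_subset_span {U : Set E} (hU : ∀ u ∈ U, ⟪u, u⟫ = 1)
    (hint : ∀ u ∈ U, ∀ v ∈ U, ∃ k : ℤ, ⟪u, v⟫ = k) {e : E} (he : e ∈ U) :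
    ∃ B ⊆ U, e ∈ B ∧ Orthonormal ℝ (Subtype.val : B → E) ∧ U ⊆ span ℤ B := by
  let S : Set (Set E) := {B | B ⊆ U ∧ B.Pairwise fun u v => ⟪u, v⟫ = 0}
  obtain ⟨B, heB, ⟨hBU, hBorth⟩, hBmax⟩ := zorn_subset_nonempty S
    (fun c hcS hc _ => ⟨⋃₀ c, ⟨Set.sUnion_subset fun s hs => (hcS hs).1,
      (Set.pairwise_sUnion hc.directedOn).2 fun s hs => (hcS hs).2⟩,
      fun _ => Set.subset_sUnion_of_mem⟩)
    {e} ⟨Set.singleton_subset_iff.2 he, Set.pairwise_singleton _ _⟩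
  refine ⟨B, hBU, heB rfl, ?_, fun u hu => ?_⟩
  · rw [orthonormal_subtype_iff_ite]
    intro v hv w hw
    split_ifs with hvw
    · exact hvw ▸ hU v (hBU hv)
    · exact hBorth hv hw hvw
  · obtain ⟨b, hb, hub⟩ : ∃ b ∈ B, ⟪u, b⟫ ≠ 0 := by
      by_contra! h
      have hins : insert u B ∈ S := ⟨Set.insert_subset hu hBU, hBorth.insert fun b hb _ =>
        ⟨h b hb, by rw [real_inner_comm]; exact h b hb⟩⟩
      have hub : u ∈ B := hBmax hins (Set.subset_insert u B) (Set.mem_insert u B)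
      exact one_ne_zero ((hU u hu).symm.trans (h u hub))
    obtain ⟨k, hk⟩ := hint u hu b (hBU hb)
    rcases eq_or_eq_neg_of_inner_eq_intCast (hU u hu) (hU b (hBU hb)) hk
      (by rintro rfl; simp [hk] at hub) with rfl | rfl
    · exact subset_span hb
    · exact neg_mem (subset_span hb)

lemma exists_linearEquiv_pi_int_of_orthonormal {ι : Type*} [Fintype ι] {v : ι → E}
    (hv : Orthonormal ℝ v) : ∃ g : span ℤ (Set.range v) ≃ₗ[ℤ] (ι → ℤ),
      ∀ x y : span ℤ (Set.range v), ⟪(x : E), y⟫ = ∑ i, (g x i : ℝ) * g y i := by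
  let b := Module.Basis.span (hv.linearIndependent.restrict_scalars' ℤ)
  refine ⟨b.equivFun, fun x y => ?_⟩
  have hrepr : ∀ z : span ℤ (Set.range v), (z : E) = ∑ i, (b.repr z i : ℝ) • v i := fun z => by
    conv_lhs => rw [← b.sum_repr z]
    simp [b, Module.Basis.span_apply, Int.cast_smul_eq_zsmul]
  rw [hrepr x, hrepr y, hv.inner_sum]
  simp

/-- Connectedness moves every vector of `R` into the span of the unit vectors, which has an
orthonormal `ℤ`-basis. -/
lemma exists_linearEquiv_pi_int_span [FiniteDimensional ℝ E] {R : Set E}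
    (hR : ∀ u ∈ R, ∀ v ∈ R, ∃ k : ℤ, ⟪u, v⟫ = k) (hnorm : ∀ u ∈ R, ⟪u, u⟫ = 1 ∨ ⟪u, u⟫ = 2)
    (hone : ∃ u ∈ R, ⟪u, u⟫ = 1) (hconn : OrthConnected R) :
    ∃ n : ℕ, 0 < n ∧ ∃ g : span ℤ R ≃ₗ[ℤ] (Fin n → ℤ),
      ∀ x y : span ℤ R, ⟪(x : E), y⟫ = ∑ i, (g x i : ℝ) * g y i := by
  have hL : IsIntegralLattice (span ℤ R) := isIntegralLattice_span hR
  obtain ⟨e, heR, he⟩ := hone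
  have heU : e ∈ unitVectors (span ℤ R) := ⟨subset_span heR, he⟩
  have hRU : R ⊆ span ℤ (unitVectors (span ℤ R)) :=
    hconn _ ⟨e, heR, subset_span heU⟩ fun u ⟨_, hu⟩ v hv huv => (hnorm v hv).elim
      (fun h1 => subset_span ⟨subset_span hv, h1⟩)
      (fun h2 => mem_span_unitVectors_of_inner_ne_zero hL (subset_span hv) h2 hu
        (by rwa [real_inner_comm]))
  obtain ⟨B, hBU, heB, hB, hUB⟩ := exists_orthonormal_subset_subset_span (fun u hu => hu.2)
    (fun u hu v hv => hL u hu.1 v hv.1) heU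
  have : Finite B := hB.linearIndependent.finite
  let eB := Finite.equivFin B
  have hrange : Set.range (Subtype.val ∘ eB.symm) = B := by
    rw [Set.range_comp, eB.symm.range_eq_univ, Set.image_univ, Subtype.range_coe]
  have hspan : span ℤ R = span ℤ (Set.range (Subtype.val ∘ eB.symm)) := by
    rw [hrange]
    exact le_antisymm (span_le.2 (hRU.trans (span_le.2 hUB))) (span_le.2 fun u hu => (hBU hu).1)
  obtain ⟨g, hg⟩ := exists_linearEquiv_pi_int_of_orthonormal (hB.comp _ eB.symm.injective)
  exact ⟨Nat.card B, Nat.card_pos_iff.2 ⟨⟨⟨e, heB⟩⟩, inferInstance⟩,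
    (LinearEquiv.ofEq _ _ hspan).trans g,
    fun x y => hg (LinearEquiv.ofEq _ _ hspan x) (LinearEquiv.ofEq _ _ hspan y)⟩

end Lattice

namespace HoffmanGraph

variable {V : Type*} {H : HoffmanGraph V}

variable (H) in
lemma exists_isSlim [Nonempty V] : ∃ x, H.IsSlim x := by
  obtain ⟨v⟩ := ‹Nonempty V›
  by_cases hv : H.IsFat v
  · obtain ⟨y, hy, -⟩ := H.fat_slim_nbr hv
    exact ⟨y, hy⟩
  · exact ⟨v, hv⟩

lemma one_le_fatDeg [Finite V] (hfat : H.IsFatGraph) {x : V} (hx : H.IsSlim x) :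
    1 ≤ H.fatDeg x := by
  obtain ⟨f, hf⟩ := hfat x hx
  exact (Set.ncard_pos (Set.toFinite _)).2 ⟨f, hf⟩

lemma commonFat_self (x : V) : H.commonFat x x = H.fatDeg x := by
  simp only [commonFat, fatDeg, and_self]

lemma matrixB_self (x : H.Slim) : H.matrixB x x = -H.fatDeg x := by
  simp [matrixB, commonFat_self]

variable (H) in
lemma matrixB_isHermitian : H.matrixB.IsHermitian := by
  ext x y
  simp only [Matrix.conjTranspose_apply, matrixB, star_trivial, H.commonFat_comm y.1 x.1,
    H.graph.adj_comm]

lemma commonFat_eq_of_matrixB_eq_zero {x y : H.Slim} (h : H.matrixB x y = 0) :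
    H.commonFat x y = if H.graph.Adj x y then 1 else 0 := by
  unfold matrixB at h
  split_ifs at h ⊢ <;> exact_mod_cast (sub_eq_zero.mp h).symm

lemma mem_closureSet_iff_of_isSlim {S : Set V} {v : V} (hv : H.IsSlim v) :
    v ∈ H.closureSet S ↔ v ∈ S :=
  or_iff_left fun h => hv h.1

lemma isGoodSubset_closureSet {S : Set V} (hS : ∀ v ∈ S, H.IsSlim v) :
    H.IsGoodSubset (H.closureSet S) := by
  rintro f (hf | ⟨-, x, hx, hxf⟩) hfat
  · exact absurd hfat (hS f hf)
  · exact ⟨x, Or.inl hx, hS x hx, hxf.symm⟩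

lemma mem_closureSet_of_adj {S : Set V} {x f : V} (hx : x ∈ H.closureSet S) (hxs : H.IsSlim x)
    (hf : H.IsFat f) (hxf : H.graph.Adj x f) : f ∈ H.closureSet S :=
  Or.inr ⟨hf, x, (mem_closureSet_iff_of_isSlim hxs).1 hx, hxf⟩

lemma mem_closureSet_image_val_iff {P : Set H.Slim} {v : V} (hv : H.IsSlim v) :
    v ∈ H.closureSet (Subtype.val '' P) ↔ (⟨v, hv⟩ : H.Slim) ∈ P := by
  rw [mem_closureSet_iff_of_isSlim hv]
  exact ⟨fun ⟨x, hx, hxv⟩ => (Subtype.ext hxv : x = ⟨v, hv⟩) ▸ hx, fun h => ⟨_, h, rfl⟩⟩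

lemma isSum_of_matrixB_eq_zero {P : Set H.Slim} (hP : P.Nonempty) (hPc : Pᶜ.Nonempty)
    (hcross : ∀ x ∈ P, ∀ y ∉ P, H.matrixB x y = 0) :
    H.IsSum (H.closureSet (Subtype.val '' P)) (H.closureSet (Subtype.val '' Pᶜ)) := by
  have hslim (Q : Set H.Slim) : ∀ v ∈ Subtype.val '' Q, H.IsSlim v := by
    rintro _ ⟨x, -, rfl⟩
    exact x.2
  have hmem (Q : Set H.Slim) (v : V) (hv : H.IsSlim v) := mem_closureSet_image_val_iff (P := Q) hv
  have hcommon : ∀ x ∈ H.closureSet (Subtype.val '' P), ∀ y ∈ H.closureSet (Subtype.val '' Pᶜ),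
      H.IsSlim x → H.IsSlim y → H.commonFat x y = if H.graph.Adj x y then 1 else 0 :=
    fun x hx y hy hxs hys =>
    commonFat_eq_of_matrixB_eq_zero (hcross _ ((hmem P x hxs).1 hx) _ ((hmem Pᶜ y hys).1 hy))
  refine
    { nonempty₁ := hP.image _ |>.mono Set.subset_union_left
      nonempty₂ := hPc.image _ |>.mono Set.subset_union_left
      good₁ := isGoodSubset_closureSet (hslim P)
      good₂ := isGoodSubset_closureSet (hslim Pᶜ)
      union_eq := ?_
      slim_partition := fun v hv => by
        rw [hmem P v hv, hmem Pᶜ v hv, Set.mem_compl_iff, not_not]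
      fat_closed₁ := fun x hx hxs f => mem_closureSet_of_adj hx hxs
      fat_closed₂ := fun x hx hxs f => mem_closureSet_of_adj hx hxs
      common_le := fun x hx y hy hxs hys => by
        rw [hcommon x hx y hy hxs hys]
        split_ifs <;> simp
      common_iff := fun x hx y hy hxs hys => by
        rw [hcommon x hx y hy hxs hys]
        split_ifs <;> simp [*] }
  refine Set.eq_univ_of_forall fun v => ?_
  by_cases hv : H.IsFat v
  · obtain ⟨y, hy, hvy⟩ := H.fat_slim_nbr hv
    by_cases hyP : (⟨y, hy⟩ : H.Slim) ∈ P
    · exact Or.inl (mem_closureSet_of_adj ((hmem P y hy).2 hyP) hy hv hvy.symm)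
    · exact Or.inr (mem_closureSet_of_adj ((hmem Pᶜ y hy).2 hyP) hy hv hvy.symm)
  · by_cases hvP : (⟨v, hv⟩ : H.Slim) ∈ P
    · exact Or.inl ((hmem P v hv).2 hvP)
    · exact Or.inr ((hmem Pᶜ v hv).2 hvP)

lemma Indecomposable.eq_univ_of_matrixB_closed (hind : H.Indecomposable) {P : Set H.Slim}
    (hP : P.Nonempty) (hclosed : ∀ x ∈ P, ∀ y, H.matrixB x y ≠ 0 → y ∈ P) : P = Set.univ := by
  by_contra hne
  refine hind ⟨_, _, isSum_of_matrixB_eq_zero hP (Set.nonempty_compl.2 hne) ?_⟩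
  intro x hx y hy
  by_contra h
  exact hy (hclosed x hx y h)

section Representation

variable {E : Type*} [NormedAddCommGroup E] [InnerProductSpace ℝ E] {ψ : V → E}

lemma IsReducedRep.inner_eq_matrixB {m : ℝ} (hψ : H.IsReducedRep m ψ) {x y : H.Slim} (hxy : x ≠ y) :
    ⟪ψ x, ψ y⟫ = H.matrixB x y := by
  unfold matrixB
  split_ifs with h
  · exact hψ.2.1 x y x.2 y.2 h
  · rw [hψ.2.2 x y x.2 y.2 (Subtype.coe_injective.ne hxy) h, zero_sub]

lemma IsReducedRep.exists_inner_eq_intCast {m : ℤ} (hψ : H.IsReducedRep m ψ) :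
    ∀ u ∈ ψ '' {v | H.IsSlim v}, ∀ w ∈ ψ '' {v | H.IsSlim v}, ∃ k : ℤ, ⟪u, w⟫ = k := by
  rintro _ ⟨x, hx, rfl⟩ _ ⟨y, hy, rfl⟩
  by_cases hxy : x = y
  · subst hxy
    exact ⟨m - H.fatDeg x, by rw [hψ.1 x hx]; push_cast; rfl⟩
  · refine ⟨(if H.graph.Adj x y then 1 else 0) - H.commonFat x y, ?_⟩
    rw [hψ.inner_eq_matrixB (x := ⟨x, hx⟩) (y := ⟨y, hy⟩) fun h => hxy (congrArg Subtype.val h)]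
    unfold matrixB
    split_ifs <;> push_cast <;> rfl

lemma Indecomposable.orthConnected_image {m : ℝ} (hind : H.Indecomposable)
    (hψ : H.IsReducedRep m ψ) :
    OrthConnected (ψ '' {v | H.IsSlim v}) := by
  rintro P ⟨_, ⟨x, hx, rfl⟩, hxP⟩ hclosed _ ⟨y, hy, rfl⟩
  have hQ := hind.eq_univ_of_matrixB_closed (P := {z : H.Slim | ψ z ∈ P}) ⟨⟨x, hx⟩, hxP⟩
    fun z hz w hzw => by
      by_cases h : z = w
      · exact h ▸ hz
      · exact hclosed _ ⟨⟨z, z.2, rfl⟩, hz⟩ _ ⟨w, w.2, rfl⟩ (hψ.inner_eq_matrixB h ▸ hzw)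
  exact (hQ.symm ▸ Set.mem_univ _ : (⟨y, hy⟩ : H.Slim) ∈ {z : H.Slim | ψ z ∈ P})

end Representation

lemma adj_iff_of_forall_isSlim_eq {x : V} (hx : H.IsSlim x) (huniq : ∀ y, H.IsSlim y → y = x)
    (v w : V) : H.graph.Adj v w ↔ (v = x ∧ w ≠ x) ∨ (v ≠ x ∧ w = x) := by
  have hfat : ∀ v, v ≠ x → H.IsFat v := fun v hv => by_contra fun h => hv (huniq v h)
  have hadj : ∀ f, f ≠ x → H.graph.Adj x f := fun f hf => by
    obtain ⟨y, hy, hfy⟩ := H.fat_slim_nbr (hfat f hf)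
    exact huniq y hy ▸ hfy.symm
  constructor
  · intro hvw
    by_cases hv : v = x
    · exact Or.inl ⟨hv, fun hw => H.graph.ne_of_adj hvw (hv.trans hw.symm)⟩
    · by_contra hw
      simp only [hv, false_and, ne_eq, not_false_eq_true, true_and, false_or] at hw
      exact H.fat_not_adj (hfat v hv) (hfat w hw) hvw
  · rintro (⟨rfl, hw⟩ | ⟨hv, rfl⟩)
    · exact hadj w hw
    · exact (hadj v hv).symm

variable [Fintype V]

lemma posSemidef_matrixB_add_smul_one {c : ℝ} (hc : -c ≤ H.lambdaMin) :
    (H.matrixB + c • 1).PosSemidef :=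
  H.matrixB_isHermitian.posSemidef_add_smul_one hc

lemma fatDeg_le_of_neg_le_lambdaMin {t : ℕ} (ht : -(t : ℝ) ≤ H.lambdaMin) {x : V}
    (hx : H.IsSlim x) : H.fatDeg x ≤ t := by
  have := (posSemidef_matrixB_add_smul_one ht).diag_nonneg (i := ⟨x, hx⟩)
  simp only [Matrix.add_apply, matrixB_self, Matrix.smul_apply, Matrix.one_apply_eq,
    smul_eq_mul, mul_one] at this
  exact_mod_cast (by linarith : (H.fatDeg x : ℝ) ≤ t)

lemma matrixB_eq_zero_of_fatDeg_eq {t : ℕ} (ht : -(t : ℝ) ≤ H.lambdaMin) {x y : H.Slim}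
    (hx : H.fatDeg x = t) (hxy : x ≠ y) : H.matrixB x y = 0 := by
  have hdiag : (H.matrixB + (t : ℝ) • 1) x x = 0 := by simp [matrixB_self, hx]
  simpa [Matrix.one_apply_ne hxy] using
    (posSemidef_matrixB_add_smul_one ht).apply_eq_zero_of_apply_self_eq_zero hdiag y

lemma Indecomposable.eq_of_fatDeg_eq (hind : H.Indecomposable) {t : ℕ}
    (ht : -(t : ℝ) ≤ H.lambdaMin) {x : V} (hx : H.IsSlim x) (hdeg : H.fatDeg x = t) :
    ∀ y, H.IsSlim y → y = x := by
  intro y hy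
  have hP := hind.eq_univ_of_matrixB_closed (P := {(⟨x, hx⟩ : H.Slim)})
    (Set.singleton_nonempty _) fun z hz w hzw => by
      rw [Set.mem_singleton_iff] at hz ⊢
      subst hz
      by_contra h
      exact hzw (matrixB_eq_zero_of_fatDeg_eq ht hdeg (Ne.symm h))
  have hmem : (⟨y, hy⟩ : H.Slim) ∈ ({⟨x, hx⟩} : Set H.Slim) := hP ▸ Set.mem_univ _
  exact congrArg Subtype.val hmem

lemma isIsoTo_manyFat_fatDeg {x : V} (hx : H.IsSlim x) (huniq : ∀ y, H.IsSlim y → y = x) :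
    H.IsIsoTo (manyFat (H.fatDeg x)) := by
  have hfat_iff : ∀ v, H.IsFat v ↔ v ≠ x := fun v =>
    ⟨fun hv hvx => hx (hvx ▸ hv), fun hv => by_contra fun h => hv (huniq v h)⟩
  have hnbr : {f | H.IsFat f ∧ H.graph.Adj x f} = {f | f ≠ x} := by
    ext f
    simp [adj_iff_of_forall_isSlim_eq hx huniq, hfat_iff, eq_comm]
  let e : V ≃ Option (Fin (H.fatDeg x)) := (Equiv.optionSubtypeNe x).symm.trans <|
    Equiv.optionCongr <| Finite.equivFinOfCardEq <| by rw [fatDeg, hnbr]; rfl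
  have he : ∀ v, e v = none ↔ v = x := fun v => by
    by_cases hv : v = x
    · simp [e, hv]
    · simp [e, hv, Equiv.optionSubtypeNe_symm_of_ne hv]
  refine ⟨e, fun v w => ?_, fun v => ?_⟩
  · simp only [manyFat, adj_iff_of_forall_isSlim_eq hx huniq, ne_eq, he]
  · simp only [manyFat, ne_eq, he, hfat_iff]

end HoffmanGraph

/-- Theorem 3.7: in a fat indecomposable Hoffman graph with smallest eigenvalue at least
`-3`, every slim vertex has at most three fat neighbors; moreover (i) if some slim vertex
has three fat neighbors then `𝔥 ≅ 𝔥^(3)`; (ii) if no slim vertex has three fat neighbors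
and some slim vertex has exactly two, then `Λ^red(𝔥,3) ≅ ℤⁿ` for some `n ≥ 1`; (iii) if
every slim vertex has exactly one fat neighbor, then `Λ^red(𝔥,3)` is an irreducible root
lattice. -/
theorem special_lattice_trichotomy {V : Type} [Fintype V] [Nonempty V]
    (H : HoffmanGraph V) (hfat : H.IsFatGraph) (hind : H.Indecomposable)
    (hmin : -3 ≤ H.lambdaMin) :
    (∀ x, H.IsSlim x → H.fatDeg x ≤ 3) ∧
    ((∃ x, H.IsSlim x ∧ H.fatDeg x = 3) → H.IsIsoTo (HoffmanGraph.manyFat 3)) ∧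
    (∀ (d : ℕ) (ψ : V → EuclideanSpace ℝ (Fin d)), H.IsReducedRep 3 ψ →
      ((((∀ x, H.IsSlim x → H.fatDeg x ≤ 2) ∧ ∃ x, H.IsSlim x ∧ H.fatDeg x = 2) →
        ∃ n : ℕ, 0 < n ∧
          ∃ g : (Submodule.span ℤ (ψ '' {v | H.IsSlim v})) ≃ₗ[ℤ] (Fin n → ℤ),
            ∀ u v : Submodule.span ℤ (ψ '' {v | H.IsSlim v}),
              ⟪(u : EuclideanSpace ℝ (Fin d)), (v : EuclideanSpace ℝ (Fin d))⟫ =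
                ∑ i, (g u i : ℝ) * (g v i : ℝ)) ∧
      ((∀ x, H.IsSlim x → H.fatDeg x = 1) →
        IsRootLattice (Submodule.span ℤ (ψ '' {v | H.IsSlim v})) ∧
        IsIrreducibleLattice (Submodule.span ℤ (ψ '' {v | H.IsSlim v}))))) := by
  have h3 : -((3 : ℕ) : ℝ) ≤ H.lambdaMin := by exact_mod_cast hmin
  refine ⟨fun x hx => HoffmanGraph.fatDeg_le_of_neg_le_lambdaMin h3 hx, ?_, fun d ψ hψ => ?_⟩
  · rintro ⟨x, hx, hdeg⟩
    exact hdeg ▸ HoffmanGraph.isIsoTo_manyFat_fatDeg hx (hind.eq_of_fatDeg_eq h3 hx hdeg)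
  have hint := HoffmanGraph.IsReducedRep.exists_inner_eq_intCast (m := 3) (by exact_mod_cast hψ)
  have hconn := hind.orthConnected_image hψ
  have hnorm : ∀ y, H.IsSlim y → ⟪ψ y, ψ y⟫ = 3 - H.fatDeg y := fun y hy => hψ.1 y hy
  refine ⟨fun ⟨hle, x, hx, hx2⟩ => ?_, fun h1 => ?_⟩
  · refine exists_linearEquiv_pi_int_span hint ?_ ⟨ψ x, ⟨x, hx, rfl⟩, ?_⟩ hconn
    · rintro _ ⟨y, hy, rfl⟩
      have hlow := HoffmanGraph.one_le_fatDeg hfat hy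
      have hhigh := hle y hy
      rw [hnorm y hy]
      interval_cases H.fatDeg y <;> norm_num
    · rw [hnorm x hx, hx2]
      norm_num
  · have h2 : ∀ u ∈ ψ '' {v | H.IsSlim v}, ⟪u, u⟫ = 2 := by
      rintro _ ⟨y, hy, rfl⟩
      rw [hnorm y hy, h1 y hy]
      norm_num
    obtain ⟨x, hx⟩ := H.exists_isSlim
    exact ⟨isRootLattice_span hint h2, isIrreducibleLattice_span hint h2 hconn ⟨ψ x, x, hx, rfl⟩⟩
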